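/- With the setup of the even-rank zigzag construction (r = 2s, p a prime divisor of n_r, g₁ = e₁ − (n_{s+1}/p)f₁, g_{2i} = eᵢ + f_{i+1}, g_{2i+1} = f_{i+1} + e_{i+1} for i = 1,…,s−1, g_r = e_s, g_{r+1} = f₁), every element z ∈ B(g₁,…,g_{r+1}) with full support satisfies |z| ≥ n₁ + ⋯ + n_s + n_{s+1}/p. -/
import Mathlib


open Finset

/-- Membership in the block monoid `B(g₁,…,g_k)`. -/
def IsBlock {G : Type*} [AddCommGroup G] {k : ℕ} (g : Fin k → G)
    (m : Fin k → ℕ) : Prop :=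
  ∑ i, (m i) • g i = 0

/-- The length `|m| = ∑ᵢ mᵢ`. -/
def blockLen {k : ℕ} (m : Fin k → ℕ) : ℕ := ∑ i, m i

/-- `m` is an atom of the block monoid: nonzero, and not the sum of two
nonzero elements of the monoid. -/
def IsBlockAtom {G : Type*} [AddCommGroup G] {k : ℕ} (g : Fin k → G)
    (m : Fin k → ℕ) : Prop :=
  IsBlock g m ∧ m ≠ 0 ∧
    ∀ a b : Fin k → ℕ, IsBlock g a → IsBlock g b → m = a + b → a = 0 ∨ b = 0

/-- `m` is a group atom: it belongs to the block monoid and cannot be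
written as an integral linear combination of elements of the block monoid
of length strictly smaller than `|m|`. -/
def IsGroupAtom {G : Type*} [AddCommGroup G] {k : ℕ} (g : Fin k → G)
    (m : Fin k → ℕ) : Prop :=
  IsBlock g m ∧
    ¬ ∃ (T : Finset (Fin k → ℕ)) (c : (Fin k → ℕ) → ℤ),
        (∀ b ∈ T, IsBlock g b ∧ blockLen b < blockLen m) ∧
        (∀ i, (m i : ℤ) = ∑ b ∈ T, c b * (b i))

/-- The even-rank zigzag elements `g₁,…,g_{2s+1}` (0-indexed) in
`G = C_{n₁} ⊕ ⋯ ⊕ C_{n_{2s}}`: `g₁ = e₁ - (n_{s+1}/p)·f₁`,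
`g_{2i} = eᵢ + f_{i+1}` and `g_{2i+1} = f_{i+1} + e_{i+1}` for
`i = 1,…,s-1`, `g_{2s} = e_s`, `g_{2s+1} = f₁`.  Coordinates `0,…,s-1`
correspond to `e₁,…,e_s` and coordinates `s,…,2s-1` to `f₁,…,f_s`. -/
def zigzagEven (s p : ℕ) (hs : 1 ≤ s) (n : Fin (2*s) → ℕ) :
    Fin (2*s+1) → ∀ c : Fin (2*s), ZMod (n c) :=
  fun t => fun c =>
    if t.val ≤ 2*s-1 ∧ c.val = t.val / 2 then 1
    else if 1 ≤ t.val ∧ t.val ≤ 2*s-2 ∧ c.val = s + (t.val + 1) / 2 then 1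
    else if t.val = 0 ∧ c.val = s then
      -((n ⟨s, by omega⟩ / p : ℕ) : ZMod (n c))
    else if t.val = 2*s ∧ c.val = s then 1
    else 0

lemma sum_range_two_mul' (f : ℕ → ℕ) (s : ℕ) :
    ∑ t ∈ range (2*s), f t = ∑ j ∈ range s, (f (2*j) + f (2*j+1)) := by
  induction s with
  | zero => simp
  | succ s ih =>
    have h : 2*(s+1) = (2*s) + 1 + 1 := by ring
    rw [h, Finset.sum_range_succ, Finset.sum_range_succ, ih, Finset.sum_range_succ]
    rw [add_assoc]

/-- auxiliary: extension of `z` to `ℕ`. -/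
def zigzagZfun (s : ℕ) (z : Fin (2*s+1) → ℕ) : ℕ → ℕ :=
  fun t => if h : t < 2*s+1 then z ⟨t, h⟩ else 0

/-- auxiliary: extension of the first `s` values of `n` to `ℕ`. -/
def zigzagNfun (s : ℕ) (n : Fin (2*s) → ℕ) : ℕ → ℕ :=
  fun j => if h : j < s then n ⟨j, by omega⟩ else 0

set_option maxHeartbeats 4000000 in
theorem zigzagEven_fullSupport_len (s p : ℕ) (hs : 1 ≤ s)
    (n : Fin (2*s) → ℕ)
    (hdvd : ∀ i j : Fin (2*s), i ≤ j → n j ∣ n i)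
    (h2 : 2 ≤ n ⟨2*s-1, by omega⟩)
    (hp : p.Prime) (hpn : p ∣ n ⟨2*s-1, by omega⟩)
    (z : Fin (2*s+1) → ℕ) (hz : IsBlock (zigzagEven s p hs n) z)
    (hsupp : ∀ i, z i ≠ 0) :
    (∑ i : Fin s, n ⟨i.val, by omega⟩) + n ⟨s, by omega⟩ / p
      ≤ blockLen z := by
  rw [IsBlock] at hz
  have hsm : s < 2*s := by omega
  have hst : 2*s < 2*s+1 := by omega
  have h0t : 0 < 2*s+1 := by omega
  -- coordinate equations for c = j, j < s
  have hA : ∀ (j : ℕ) (hj2 : j < 2*s) (ha : 2*j < 2*s+1) (hb : 2*j+1 < 2*s+1),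
      j < s → n ⟨j, hj2⟩ ∣ z ⟨2*j, ha⟩ + z ⟨2*j+1, hb⟩ := by
    intro j hj2 ha hb hj
    have hc : ∑ t : Fin (2*s+1), z t • zigzagEven s p hs n t ⟨j, hj2⟩
        = (0 : ZMod (n ⟨j, hj2⟩)) := by
      have := congrFun hz ⟨j, hj2⟩
      simpa using this
    have key : (∑ t : Fin (2*s+1), z t • zigzagEven s p hs n t ⟨j, hj2⟩)
        = z ⟨2*j, ha⟩ • zigzagEven s p hs n ⟨2*j, ha⟩ ⟨j, hj2⟩
          + z ⟨2*j+1, hb⟩ • zigzagEven s p hs n ⟨2*j+1, hb⟩ ⟨j, hj2⟩ := by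
      apply Fintype.sum_eq_add
      · simp only [ne_eq, Fin.mk.injEq]; omega
      · rintro t ⟨ht1, ht2⟩
        have h1 : t.val ≠ 2*j := fun h => ht1 (Fin.ext h)
        have h2' : t.val ≠ 2*j+1 := fun h => ht2 (Fin.ext h)
        have h3 := t.isLt
        simp only [zigzagEven]
        rw [if_neg (by omega), if_neg (by omega), if_neg (by omega), if_neg (by omega),
          smul_zero]
    have hga : zigzagEven s p hs n ⟨2*j, ha⟩ ⟨j, hj2⟩ = 1 := by
      simp only [zigzagEven]
      rw [if_pos (by constructor <;> omega)]
    have hgb : zigzagEven s p hs n ⟨2*j+1, hb⟩ ⟨j, hj2⟩ = 1 := by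
      simp only [zigzagEven]
      rw [if_pos (by constructor <;> omega)]
    rw [key, hga, hgb] at hc
    simp only [nsmul_eq_mul, mul_one] at hc
    have hc2 : ((z ⟨2*j, ha⟩ + z ⟨2*j+1, hb⟩ : ℕ) : ZMod (n ⟨j, hj2⟩)) = 0 := by
      push_cast
      exact hc
    exact (CharP.cast_eq_zero_iff (ZMod (n ⟨j, hj2⟩)) (n ⟨j, hj2⟩) _).mp hc2
  -- coordinate equation at c = s
  set m := n ⟨s, hsm⟩ with hm
  set q := m / p with hq
  have hpm : p ∣ m :=
    dvd_trans hpn (hdvd ⟨s, hsm⟩ ⟨2*s-1, by omega⟩ (by simp [Fin.le_def]; omega))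
  have hqp : q * p = m := Nat.div_mul_cancel hpm
  have hqm : q ∣ m := ⟨p, hqp.symm⟩
  have hB : q ∣ z ⟨2*s, hst⟩ := by
    have hc : ∑ t : Fin (2*s+1), z t • zigzagEven s p hs n t ⟨s, hsm⟩
        = (0 : ZMod (n ⟨s, hsm⟩)) := by
      have := congrFun hz ⟨s, hsm⟩
      simpa using this
    have key : (∑ t : Fin (2*s+1), z t • zigzagEven s p hs n t ⟨s, hsm⟩)
        = z ⟨0, h0t⟩ • zigzagEven s p hs n ⟨0, h0t⟩ ⟨s, hsm⟩
          + z ⟨2*s, hst⟩ • zigzagEven s p hs n ⟨2*s, hst⟩ ⟨s, hsm⟩ := by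
      apply Fintype.sum_eq_add
      · simp only [ne_eq, Fin.mk.injEq]; omega
      · rintro t ⟨ht1, ht2⟩
        have h1 : t.val ≠ 0 := fun h => ht1 (Fin.ext h)
        have h2' : t.val ≠ 2*s := fun h => ht2 (Fin.ext h)
        have h3 := t.isLt
        simp only [zigzagEven]
        rw [if_neg (by omega), if_neg (by omega), if_neg (by omega), if_neg (by omega),
          smul_zero]
    have hga : zigzagEven s p hs n ⟨0, h0t⟩ ⟨s, hsm⟩ = -((q : ℕ) : ZMod m) := by
      simp only [zigzagEven]
      rw [if_neg (by omega), if_neg (by omega), if_pos (by exact ⟨by trivial, by trivial⟩)]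
    have hgb : zigzagEven s p hs n ⟨2*s, hst⟩ ⟨s, hsm⟩ = 1 := by
      simp only [zigzagEven]
      rw [if_neg (by omega), if_neg (by omega), if_neg (by omega), if_pos (by exact ⟨by trivial, by trivial⟩)]
    rw [key, hga, hgb] at hc
    simp only [nsmul_eq_mul, mul_one, mul_neg] at hc
    obtain ⟨e, he⟩ : ∃ e : ℤ, e = (z ⟨2*s, hst⟩ : ℤ) - (z ⟨0, h0t⟩ : ℤ) * (q : ℤ) := ⟨_, rfl⟩
    have hc2 : ((e : ℤ) : ZMod m) = 0 := by
      rw [he]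
      push_cast
      linear_combination hc
    have hdm : (m : ℤ) ∣ (z ⟨2*s, hst⟩ : ℤ) - (z ⟨0, h0t⟩ : ℤ) * (q : ℤ) :=
      he ▸ (CharP.intCast_eq_zero_iff (ZMod m) m _).mp hc2
    have hdq : (q : ℤ) ∣ (z ⟨2*s, hst⟩ : ℤ) := by
      have h1 : (q : ℤ) ∣ (z ⟨2*s, hst⟩ : ℤ) - (z ⟨0, h0t⟩ : ℤ) * (q : ℤ) :=
        dvd_trans (Int.natCast_dvd_natCast.mpr hqm) hdm
      have h2' : (q : ℤ) ∣ (z ⟨0, h0t⟩ : ℤ) * (q : ℤ) := dvd_mul_left _ _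
      have := dvd_add h1 h2'
      simpa using this
    exact Int.natCast_dvd_natCast.mp hdq
  -- assemble
  have hlen : blockLen z = ∑ t ∈ range (2*s+1), zigzagZfun s z t := by
    have h1 : blockLen z = ∑ i : Fin (2*s+1), zigzagZfun s z i.val := by
      rw [blockLen]
      exact Finset.sum_congr rfl fun i _ => by simp [zigzagZfun, i.isLt]
    rw [h1]
    exact Fin.sum_univ_eq_sum_range _ _
  have hL : (∑ i : Fin s, n ⟨i.val, by omega⟩) = ∑ j ∈ range s, zigzagNfun s n j := by
    have h1 : (∑ i : Fin s, n ⟨i.val, by omega⟩) = ∑ i : Fin s, zigzagNfun s n i.val :=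
      Finset.sum_congr rfl fun i _ => by simp [zigzagNfun, i.isLt]
    rw [h1]
    exact Fin.sum_univ_eq_sum_range _ _
  rw [hlen, Finset.sum_range_succ, sum_range_two_mul', hL]
  have hqle : q ≤ zigzagZfun s z (2*s) := by
    have hZe : zigzagZfun s z (2*s) = z ⟨2*s, hst⟩ := by simp [zigzagZfun, hst]
    rw [hZe]
    exact Nat.le_of_dvd (Nat.pos_of_ne_zero (hsupp _)) hB
  have hsum : ∑ j ∈ range s, zigzagNfun s n j
      ≤ ∑ j ∈ range s, (zigzagZfun s z (2*j) + zigzagZfun s z (2*j+1)) := by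
    apply Finset.sum_le_sum
    intro j hj
    have hjs : j < s := Finset.mem_range.mp hj
    have ha : 2*j < 2*s+1 := by omega
    have hb : 2*j+1 < 2*s+1 := by omega
    have hZ1 : zigzagZfun s z (2*j) = z ⟨2*j, ha⟩ := by simp [zigzagZfun, ha]
    have hZ2 : zigzagZfun s z (2*j+1) = z ⟨2*j+1, hb⟩ := by simp [zigzagZfun, hb]
    have hN1 : zigzagNfun s n j = n ⟨j, by omega⟩ := by simp [zigzagNfun, hjs]
    rw [hZ1, hZ2, hN1]
    exact Nat.le_of_dvd (by have := Nat.pos_of_ne_zero (hsupp ⟨2*j, ha⟩); omega)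
      (hA j (by omega) ha hb hjs)
  exact Nat.add_le_add hsum hqle
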